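/- Given a geometric classical r-matrix datum on A, the derivations preserve the spans of the coefficient functions as follows: a¹ᵢ(a⁰ₖ) ∈ V for all i,k; a¹ᵢ(b⁰ⱼ) ∈ V₂ for all i,j; b¹ⱼ(a⁰ᵢ) ∈ V₁ for all i,j; and b¹ⱼ(b⁰ₗ) ∈ V for all j,l. In particular V is invariant under every a¹ᵢ and every b¹ⱼ. -/

import Mathlib

/-!
Each of (E1)–(E3) is an identity in a triple tensor product. Pairing two of its legs with
functionals dual to the linearly independent families (picking out one index in each) collapses
it to an identity in `A` that expresses `a¹ᵢ(a⁰ₖ)`, `a¹ᵢ(b⁰ⱼ)`, `b¹ⱼ(a⁰ᵢ)` or `b¹ⱼ(b⁰ₗ)` as a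
combination of the `a⁰` and `b⁰`. Invariance of `V` follows since `V` is spanned by these.
-/

open TensorProduct

set_option synthInstance.maxHeartbeats 1000000
set_option maxHeartbeats 1000000

/-- A *geometric classical r-matrix datum* on a commutative ℂ-algebra `A`:
finite families `a¹ᵢ, b¹ⱼ` of derivations and `a⁰ᵢ, b⁰ⱼ` of elements of `A`,
each linearly independent over ℂ, satisfying the three components (E1)–(E3)
of the classical Yang–Baxter equation. -/
structure GeomRMatrixDatum (A : Type*) [CommRing A] [Algebra ℂ A] where
  m : ℕ
  n : ℕ
  a1 : Fin m → Derivation ℂ A A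
  a0 : Fin m → A
  b1 : Fin n → Derivation ℂ A A
  b0 : Fin n → A
  indep_a1 : LinearIndependent ℂ a1
  indep_a0 : LinearIndependent ℂ a0
  indep_b1 : LinearIndependent ℂ b1
  indep_b0 : LinearIndependent ℂ b0
  E1 : ∑ i, ∑ k, (⁅a1 i, a1 k⁆ ⊗ₜ[ℂ] (a0 i ⊗ₜ[ℂ] a0 k))
      = ∑ i, ∑ k, (a1 i ⊗ₜ[ℂ] ((a1 k) (a0 i) ⊗ₜ[ℂ] a0 k))
      + ∑ i, ∑ l, (a1 i ⊗ₜ[ℂ] (b0 l ⊗ₜ[ℂ] (b1 l) (a0 i)))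
  E2 : ∑ j, ∑ k, ((a1 k) (b0 j) ⊗ₜ[ℂ] (b1 j ⊗ₜ[ℂ] a0 k))
      = ∑ j, ∑ k, (b0 j ⊗ₜ[ℂ] (⁅b1 j, a1 k⁆ ⊗ₜ[ℂ] a0 k))
      + ∑ j, ∑ k, (b0 j ⊗ₜ[ℂ] (a1 k ⊗ₜ[ℂ] (b1 j) (a0 k)))
  E3 : ∑ i, ∑ l, ((a1 i) (b0 l) ⊗ₜ[ℂ] (a0 i ⊗ₜ[ℂ] b1 l))
      + ∑ j, ∑ l, (b0 j ⊗ₜ[ℂ] ((b1 j) (b0 l) ⊗ₜ[ℂ] b1 l))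
      + ∑ j, ∑ l, (b0 j ⊗ₜ[ℂ] (b0 l ⊗ₜ[ℂ] ⁅b1 j, b1 l⁆)) = 0

variable {A : Type*} [CommRing A] [Algebra ℂ A]

/-- `V₁ = span_ℂ{a⁰ᵢ}`. -/
def GeomRMatrixDatum.V1 (D : GeomRMatrixDatum A) : Submodule ℂ A :=
  Submodule.span ℂ (Set.range D.a0)

/-- `V₂ = span_ℂ{b⁰ⱼ}`. -/
def GeomRMatrixDatum.V2 (D : GeomRMatrixDatum A) : Submodule ℂ A :=
  Submodule.span ℂ (Set.range D.b0)

/-- `V = V₁ + V₂`. -/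
def GeomRMatrixDatum.V (D : GeomRMatrixDatum A) : Submodule ℂ A := D.V1 ⊔ D.V2

theorem GeomRMatrixDatum.a0_mem_V (D : GeomRMatrixDatum A) (i : Fin D.m) :
    D.a0 i ∈ D.V :=
  Submodule.mem_sup_left (Submodule.subset_span (Set.mem_range_self i))

theorem GeomRMatrixDatum.b0_mem_V (D : GeomRMatrixDatum A) (j : Fin D.n) :
    D.b0 j ∈ D.V :=
  Submodule.mem_sup_right (Submodule.subset_span (Set.mem_range_self j))

theorem LinearIndependent.exists_dual_apply_eq_ite {K M ι : Type*} [DivisionRing K]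
    [AddCommGroup M] [Module K M] [DecidableEq ι] {v : ι → M} (hv : LinearIndependent K v) (i : ι) :
    ∃ φ : M →ₗ[K] K, ∀ j, φ (v j) = if j = i then 1 else 0 := by
  obtain ⟨φ, hφ⟩ := LinearMap.exists_extend ((Finsupp.lapply i).comp hv.repr)
  refine ⟨φ, fun j => ?_⟩
  have hj : v j ∈ Submodule.span K (Set.range v) := Submodule.subset_span ⟨j, rfl⟩
  rw [← Submodule.coe_mk (v j) hj, ← Submodule.subtype_apply, ← LinearMap.comp_apply, hφ]
  simp [hv.repr_eq_single j ⟨v j, hj⟩ rfl, Finsupp.single_apply]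

namespace TensorProduct

variable {R M N P : Type*} [CommSemiring R] [AddCommMonoid M] [Module R M] [AddCommMonoid N]
  [Module R N] [AddCommMonoid P] [Module R P]

def contract₁₂ (f : M →ₗ[R] R) (g : N →ₗ[R] R) : M ⊗[R] (N ⊗[R] P) →ₗ[R] P :=
  (TensorProduct.lid R P).toLinearMap ∘ₗ LinearMap.rTensor P g ∘ₗ
    (TensorProduct.lid R (N ⊗[R] P)).toLinearMap ∘ₗ LinearMap.rTensor (N ⊗[R] P) f

def contract₁₃ (f : M →ₗ[R] R) (h : P →ₗ[R] R) : M ⊗[R] (N ⊗[R] P) →ₗ[R] N :=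
  (TensorProduct.rid R N).toLinearMap ∘ₗ LinearMap.lTensor N h ∘ₗ
    (TensorProduct.lid R (N ⊗[R] P)).toLinearMap ∘ₗ LinearMap.rTensor (N ⊗[R] P) f

def contract₂₃ (g : N →ₗ[R] R) (h : P →ₗ[R] R) : M ⊗[R] (N ⊗[R] P) →ₗ[R] M :=
  (TensorProduct.rid R M).toLinearMap ∘ₗ
    LinearMap.lTensor M (LinearMap.mul' R R ∘ₗ TensorProduct.map g h)

@[simp]
theorem contract₁₂_tmul (f : M →ₗ[R] R) (g : N →ₗ[R] R) (m : M) (n : N) (p : P) :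
    contract₁₂ f g (m ⊗ₜ (n ⊗ₜ p)) = (f m * g n) • p := by
  simp [contract₁₂, mul_smul]

@[simp]
theorem contract₁₃_tmul (f : M →ₗ[R] R) (h : P →ₗ[R] R) (m : M) (n : N) (p : P) :
    contract₁₃ f h (m ⊗ₜ (n ⊗ₜ p)) = (f m * h p) • n := by
  simp [contract₁₃, mul_smul]

@[simp]
theorem contract₂₃_tmul (g : N →ₗ[R] R) (h : P →ₗ[R] R) (m : M) (n : N) (p : P) :
    contract₂₃ g h (m ⊗ₜ (n ⊗ₜ p)) = (g n * h p) • m := by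
  simp [contract₂₃]

end TensorProduct

namespace GeomRMatrixDatum

open Submodule

variable (D : GeomRMatrixDatum A)

theorem smul_a0_mem_V1 (c : ℂ) (i : Fin D.m) : c • D.a0 i ∈ D.V1 :=
  smul_mem _ c (subset_span ⟨i, rfl⟩)

theorem smul_b0_mem_V2 (c : ℂ) (j : Fin D.n) : c • D.b0 j ∈ D.V2 :=
  smul_mem _ c (subset_span ⟨j, rfl⟩)

theorem a1_a0_mem_V (i k : Fin D.m) : D.a1 i (D.a0 k) ∈ D.V := by
  obtain ⟨φ, hφ⟩ := D.indep_a1.exists_dual_apply_eq_ite k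
  obtain ⟨ψ, hψ⟩ := D.indep_a0.exists_dual_apply_eq_ite i
  have h : ∑ x, φ ⁅D.a1 x, D.a1 i⁆ • D.a0 x
      = D.a1 i (D.a0 k) + ∑ x, ψ (D.b1 x (D.a0 k)) • D.b0 x := by
    simpa [hφ, hψ] using congrArg (contract₁₃ φ ψ) D.E1
  rw [eq_sub_of_add_eq h.symm]
  exact sub_mem (mem_sup_left (sum_mem fun x _ => D.smul_a0_mem_V1 _ x))
    (mem_sup_right (sum_mem fun x _ => D.smul_b0_mem_V2 _ x))

theorem a1_b0_mem_V2 (i : Fin D.m) (j : Fin D.n) : D.a1 i (D.b0 j) ∈ D.V2 := by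
  obtain ⟨φ, hφ⟩ := D.indep_b1.exists_dual_apply_eq_ite j
  obtain ⟨ψ, hψ⟩ := D.indep_a0.exists_dual_apply_eq_ite i
  have h : D.a1 i (D.b0 j) = ∑ x, φ ⁅D.b1 x, D.a1 i⁆ • D.b0 x
      + ∑ x, ∑ y, (φ (D.a1 y) * ψ (D.b1 x (D.a0 y))) • D.b0 x := by
    simpa [hφ, hψ] using congrArg (contract₂₃ φ ψ) D.E2
  rw [h]
  exact add_mem (sum_mem fun x _ => D.smul_b0_mem_V2 _ x)
    (sum_mem fun x _ => sum_mem fun _ _ => D.smul_b0_mem_V2 _ x)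

theorem b1_a0_mem_V1 (i : Fin D.m) (j : Fin D.n) : D.b1 j (D.a0 i) ∈ D.V1 := by
  obtain ⟨φ, hφ⟩ := D.indep_b0.exists_dual_apply_eq_ite j
  obtain ⟨ψ, hψ⟩ := D.indep_a1.exists_dual_apply_eq_ite i
  have h : ∑ x, ∑ y, (φ (D.a1 y (D.b0 x)) * ψ (D.b1 x)) • D.a0 y
      = ∑ y, ψ ⁅D.b1 j, D.a1 y⁆ • D.a0 y + D.b1 j (D.a0 i) := by
    simpa [hφ, hψ] using congrArg (contract₁₂ φ ψ) D.E2
  rw [eq_sub_of_add_eq' h.symm]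
  exact sub_mem (sum_mem fun _ _ => sum_mem fun y _ => D.smul_a0_mem_V1 _ y)
    (sum_mem fun y _ => D.smul_a0_mem_V1 _ y)

theorem b1_b0_mem_V (j l : Fin D.n) : D.b1 j (D.b0 l) ∈ D.V := by
  obtain ⟨φ, hφ⟩ := D.indep_b0.exists_dual_apply_eq_ite j
  obtain ⟨ψ, hψ⟩ := D.indep_b1.exists_dual_apply_eq_ite l
  have h : ∑ x, φ (D.a1 x (D.b0 l)) • D.a0 x + D.b1 j (D.b0 l)
      + ∑ x, ψ ⁅D.b1 j, D.b1 x⁆ • D.b0 x = 0 := by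
    simpa [hφ, hψ] using congrArg (contract₁₃ φ ψ) D.E3
  rw [eq_sub_of_add_eq' (eq_neg_of_add_eq_zero_left h)]
  exact sub_mem (neg_mem (mem_sup_right (sum_mem fun x _ => D.smul_b0_mem_V2 _ x)))
    (mem_sup_left (sum_mem fun x _ => D.smul_a0_mem_V1 _ x))

theorem V_le_comap (f : A →ₗ[ℂ] A) (ha : ∀ i, f (D.a0 i) ∈ D.V) (hb : ∀ j, f (D.b0 j) ∈ D.V) :
    D.V ≤ D.V.comap f :=
  sup_le (span_le.2 (Set.range_subset_iff.2 ha)) (span_le.2 (Set.range_subset_iff.2 hb))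

end GeomRMatrixDatum

/-- The derivations of a geometric classical r-matrix datum preserve the spans of the
coefficient functions: `a¹ᵢ(a⁰ₖ) ∈ V`, `a¹ᵢ(b⁰ⱼ) ∈ V₂`, `b¹ⱼ(a⁰ᵢ) ∈ V₁`, `b¹ⱼ(b⁰ₗ) ∈ V`;
in particular `V` is invariant under every `a¹ᵢ` and every `b¹ⱼ`. -/
theorem derivations_preserve_spans (D : GeomRMatrixDatum A) :
    (∀ (i k : Fin D.m), D.a1 i (D.a0 k) ∈ D.V) ∧
    (∀ (i : Fin D.m) (j : Fin D.n), D.a1 i (D.b0 j) ∈ D.V2) ∧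
    (∀ (i : Fin D.m) (j : Fin D.n), D.b1 j (D.a0 i) ∈ D.V1) ∧
    (∀ (j l : Fin D.n), D.b1 j (D.b0 l) ∈ D.V) ∧
    (∀ (i : Fin D.m), ∀ f ∈ D.V, D.a1 i f ∈ D.V) ∧
    (∀ (j : Fin D.n), ∀ f ∈ D.V, D.b1 j f ∈ D.V) :=
  ⟨D.a1_a0_mem_V, D.a1_b0_mem_V2, D.b1_a0_mem_V1, D.b1_b0_mem_V,
    fun i => D.V_le_comap (D.a1 i) (D.a1_a0_mem_V i)
      fun j => Submodule.mem_sup_right (D.a1_b0_mem_V2 i j),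
    fun j => D.V_le_comap (D.b1 j) (fun i => Submodule.mem_sup_left (D.b1_a0_mem_V1 i j))
      (D.b1_b0_mem_V j)⟩
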